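/- For every integer n ≥ 0, every integer k, and all reals x, y, the following four identities hold: (1) B_{n,p,q}^{(k)}(x) = Σ_{l=0}^{n} Σ_{m=0}^{n} (−1)^{n−m} · m! · S_2(n,m,x) · S_2(m,l,y) · C_{l,p,q}^{(k)}(y); (2) B_{n,p,q}^{(k)}(x) = Σ_{l=0}^{n} Σ_{m=0}^{n} (−1)^{n} · m! · S_2(n,m,x) · S_2(m,l,−y) · Ĉ_{l,p,q}^{(k)}(y); (3) C_{n,p,q}^{(k)}(x) = Σ_{l=0}^{n} Σ_{m=0}^{n} ((−1)^{n−m}/m!) · S_1(n,m,x) · S_1(m,l,y) · B_{l,p,q}^{(k)}(y); (4) Ĉ_{n,p,q}^{(k)}(x) = Σ_{l=0}^{n} Σ_{m=0}^{n} ((−1)^{n}/m!) · S_1(n,m,−x) · S_1(m,l,y) · B_{l,p,q}^{(k)}(y). -/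

import Mathlib

open Finset

/-- The `(p,q)`-integer `[m]_{p,q} = (p^m - q^m)/(p - q)`. -/
noncomputable def pqInt (p q : ℝ) (m : ℕ) : ℝ := (p ^ m - q ^ m) / (p - q)

/-- The exponential generating function `∑ f n * t^n / n!` of a sequence `f`. -/
noncomputable def egf (f : ℕ → ℝ) : PowerSeries ℝ :=
  PowerSeries.mk fun n => f n / n.factorial

/-- The power series `∑_{m ≥ 0} (1 - e^{-t})^m / [m+1]_{p,q}^k`
(which equals `Li_{k,p,q}(1 - e^{-t}) / (1 - e^{-t})`).
Since `(1 - e^{-t})^m` has order at least `m`, the `n`-th coefficient only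
receives contributions from `m ≤ n`. -/
noncomputable def pqBernSeries (p q : ℝ) (k : ℤ) : PowerSeries ℝ :=
  PowerSeries.mk fun n =>
    ∑ m ∈ Finset.range (n + 1),
      PowerSeries.coeff (R := ℝ) n ((1 - PowerSeries.rescale (-1) (PowerSeries.exp ℝ)) ^ m) /
        pqInt p q (m + 1) ^ k

/-- The unsigned Stirling numbers of the first kind, defined by the recurrence
`S1(n+1, m+1) = n * S1(n, m+1) + S1(n, m)`, so that
`x(x+1)⋯(x+n-1) = ∑_{m=0}^{n} S1(n,m) x^m`. -/
def stirling1 : ℕ → ℕ → ℕ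
  | 0, 0 => 1
  | 0, _ + 1 => 0
  | _ + 1, 0 => 0
  | n + 1, m + 1 => n * stirling1 n (m + 1) + stirling1 n m

/-- Carlitz's weighted Stirling numbers of the first kind,
`S1(n,m,x) = ∑_{i=0}^{n-m} binom(m+i,i) S1(n,m+i) x^i`. -/
noncomputable def stirling1W (n m : ℕ) (x : ℝ) : ℝ :=
  ∑ i ∈ Finset.range (n - m + 1), ((m + i).choose i : ℝ) * (stirling1 n (m + i) : ℝ) * x ^ i

/-- Carlitz's weighted Stirling numbers of the second kind,
`S2(n,m,x) = (1/m!) ∑_{j=0}^{m} (-1)^(m-j) binom(m,j) (x+j)^n`. -/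
noncomputable def stirling2W (n m : ℕ) (x : ℝ) : ℝ :=
  (1 / (m.factorial : ℝ)) *
    ∑ j ∈ Finset.range (m + 1), (-1 : ℝ) ^ (m - j) * (m.choose j : ℝ) * (x + j) ^ n

/-- The `(p,q)`-poly-Cauchy polynomials of the first kind. -/
noncomputable def pqCauchy1 (p q : ℝ) (k : ℤ) (x : ℝ) (n : ℕ) : ℝ :=
  ∑ m ∈ Finset.range (n + 1),
    (-1 : ℝ) ^ (n - m) * (stirling1 n m : ℝ) *
      ∑ l ∈ Finset.range (m + 1),
        (m.choose l : ℝ) * (-x) ^ l / pqInt p q (m - l + 1) ^ k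

/-- The `(p,q)`-poly-Cauchy polynomials of the second kind. -/
noncomputable def pqCauchy2 (p q : ℝ) (k : ℤ) (x : ℝ) (n : ℕ) : ℝ :=
  (-1 : ℝ) ^ n *
    ∑ m ∈ Finset.range (n + 1),
      (stirling1 n m : ℝ) *
        ∑ l ∈ Finset.range (m + 1),
          (m.choose l : ℝ) * (-x) ^ l / pqInt p q (m - l + 1) ^ k


/-!
Both polynomial families are Stirling transforms of the one sequence `a m = [m+1]_{p,q}^{-k}`.
Expanding `(1 - e^{-t})^m e^{-xt}` binomially gives `B_n(x) = ∑ₘ (-1)^{n+m} m! S₂(n,m,x) a m`,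
and expanding the binomials in the definitions gives `C_n(x) = ∑ₘ (-1)^{n-m} S₁(n,m,x) a m` and
`Ĉ_n(x) = (-1)^n ∑ₘ S₁(n,m,-x) a m`. For fixed `y`, the matrices `S₂(n,m,y)` and
`(-1)^{n+m} S₁(n,m,y)` are lower triangular and mutually inverse (an induction on their
triangular recurrences), so substituting one closed form into another gives each identity.
-/

theorem neg_one_pow_mul_self {R : Type*} [Monoid R] [HasDistribNeg R] (n : ℕ) :
    (-1 : R) ^ n * (-1) ^ n = 1 := by
  rw [← pow_add, ← two_mul, pow_mul, neg_one_sq, one_pow]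

theorem neg_one_pow_sub_of_le {R : Type*} [Monoid R] [HasDistribNeg R] {m n : ℕ} (h : m ≤ n) :
    (-1 : R) ^ (n - m) = (-1) ^ (n + m) := by
  obtain ⟨d, rfl⟩ := Nat.exists_eq_add_of_le h
  rw [Nat.add_sub_cancel_left, add_comm m d, add_assoc, pow_add, pow_add _ m,
    neg_one_pow_mul_self, mul_one]

section RisingFactorial

open Polynomial

theorem coeff_ascPochhammer {R : Type*} [Semiring R] (n m : ℕ) :
    (ascPochhammer R n).coeff m = stirling1 n m := by
  induction n generalizing m with
  | zero => cases m <;> simp [stirling1, coeff_one]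
  | succ n ih =>
    rw [ascPochhammer_succ_right, mul_add]
    cases m with
    | zero => cases n <;> simp [ih, stirling1]
    | succ m =>
      simp [ih, stirling1, coeff_mul_X]
      rw [Nat.cast_comm, add_comm]

theorem stirling1_eq_zero_of_lt {n m : ℕ} (h : n < m) : stirling1 n m = 0 := by
  rw [← Nat.cast_id (stirling1 n m), ← coeff_ascPochhammer]
  exact coeff_eq_zero_of_natDegree_lt (by rwa [ascPochhammer_natDegree])

theorem stirling1W_eq_zero_of_lt {n m : ℕ} (h : n < m) (x : ℝ) : stirling1W n m x = 0 := by
  simp [stirling1W, Nat.sub_eq_zero_of_le h.le, stirling1_eq_zero_of_lt h]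

theorem stirling1W_eq_sum_choose (n m : ℕ) (x : ℝ) :
    stirling1W n m x = ∑ j ∈ range (n + 1), (stirling1 n j : ℝ) * (x ^ (j - m) * j.choose m) := by
  rcases le_or_gt m n with h | h
  · obtain ⟨d, rfl⟩ := Nat.exists_eq_add_of_le h
    have hlow : ∑ j ∈ range m, (stirling1 (m + d) j : ℝ) * (x ^ (j - m) * j.choose m) = 0 :=
      sum_eq_zero fun j hj => by simp [Nat.choose_eq_zero_of_lt (mem_range.1 hj)]
    rw [stirling1W, Nat.add_sub_cancel_left, add_assoc, sum_range_add _ m, hlow, zero_add]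
    refine sum_congr rfl fun i _ => ?_
    rw [Nat.add_sub_cancel_left, Nat.choose_symm_add]
    ring
  · rw [stirling1W_eq_zero_of_lt h]
    refine (sum_eq_zero fun j hj => ?_).symm
    rw [Nat.choose_eq_zero_of_lt (by rw [mem_range] at hj; omega)]
    simp

theorem stirling1W_eq_coeff (n m : ℕ) (x : ℝ) :
    stirling1W n m x = ((ascPochhammer ℝ n).comp (X + C x)).coeff m := by
  rw [stirling1W_eq_sum_choose, as_sum_range' (ascPochhammer ℝ n) (n + 1)
    (by rw [ascPochhammer_natDegree]; omega), Polynomial.sum_comp, finsetSum_coeff]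
  refine sum_congr rfl fun j _ => ?_
  rw [monomial_comp, coeff_C_mul, coeff_X_add_C_pow, coeff_ascPochhammer]

theorem ascPochhammer_succ_comp_X_add_C {R : Type*} [CommSemiring R] (n : ℕ) (x : R) :
    (ascPochhammer R (n + 1)).comp (X + C x) =
      (ascPochhammer R n).comp (X + C x) * (X + C (x + n)) := by
  rw [ascPochhammer_succ_right, mul_comp, add_comp, X_comp, natCast_comp, C_add, C_eq_natCast,
    add_assoc]

theorem stirling1W_zero_left (m : ℕ) (x : ℝ) : stirling1W 0 m x = if m = 0 then 1 else 0 := by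
  simp [stirling1W_eq_coeff, coeff_one]

theorem stirling1W_succ_zero (n : ℕ) (x : ℝ) :
    stirling1W (n + 1) 0 x = (x + n) * stirling1W n 0 x := by
  rw [stirling1W_eq_coeff, stirling1W_eq_coeff, ascPochhammer_succ_comp_X_add_C, mul_add,
    coeff_add, coeff_mul_X_zero, coeff_mul_C, zero_add, mul_comm]

theorem stirling1W_succ_succ (n m : ℕ) (x : ℝ) :
    stirling1W (n + 1) (m + 1) x = stirling1W n m x + (x + n) * stirling1W n (m + 1) x := by
  rw [stirling1W_eq_coeff, stirling1W_eq_coeff, stirling1W_eq_coeff,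
    ascPochhammer_succ_comp_X_add_C, mul_add, coeff_add, coeff_mul_X, coeff_mul_C, mul_comm]

end RisingFactorial

-- The sign `(-1)^(n+m)` agrees with `(-1)^(n-m)` for `m ≤ n` but avoids truncated subtraction.
noncomputable def signedStirling1W (n m : ℕ) (x : ℝ) : ℝ := (-1) ^ (n + m) * stirling1W n m x

theorem signedStirling1W_eq_zero_of_lt {n m : ℕ} (h : n < m) (x : ℝ) :
    signedStirling1W n m x = 0 := by
  rw [signedStirling1W, stirling1W_eq_zero_of_lt h, mul_zero]

theorem signedStirling1W_zero_left (m : ℕ) (x : ℝ) :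
    signedStirling1W 0 m x = if m = 0 then 1 else 0 := by
  rcases m with _ | m <;> simp [signedStirling1W, stirling1W_zero_left]

theorem signedStirling1W_succ_zero (n : ℕ) (x : ℝ) :
    signedStirling1W (n + 1) 0 x = -(x + n) * signedStirling1W n 0 x := by
  rw [signedStirling1W, signedStirling1W, stirling1W_succ_zero]
  ring

theorem signedStirling1W_succ_succ (n m : ℕ) (x : ℝ) :
    signedStirling1W (n + 1) (m + 1) x =
      signedStirling1W n m x - (x + n) * signedStirling1W n (m + 1) x := by
  rw [signedStirling1W, signedStirling1W, signedStirling1W, stirling1W_succ_succ]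
  ring

namespace PowerSeries

theorem coeff_pow_mul_eq_zero_of_lt {R : Type*} [CommSemiring R] {f : R⟦X⟧}
    (hf : constantCoeff f = 0) (g : R⟦X⟧) {m n : ℕ} (h : n < m) : coeff n (f ^ m * g) = 0 :=
  X_pow_dvd_iff.1 ((pow_dvd_pow_of_dvd (X_dvd_iff.2 hf) m).mul_right g) n h

theorem coeff_rescale_exp {A : Type*} [Field A] [CharZero A] (c : A) (n : ℕ) :
    coeff n (rescale c (exp A)) = c ^ n / n.factorial := by
  simp [coeff_rescale, coeff_exp, div_eq_mul_inv]

theorem derivative_rescale_exp {A : Type*} [Field A] [CharZero A] (c : A) :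
    derivative A (rescale c (exp A)) = C c * rescale c (exp A) := by
  ext n
  rw [coeff_derivative, coeff_C_mul, coeff_rescale_exp, coeff_rescale_exp, Nat.factorial_succ]
  push_cast
  field_simp
  ring

end PowerSeries

section GeneratingFunctions

open PowerSeries

theorem coeff_exp_sub_one_pow_mul_rescale_exp (m n : ℕ) (x : ℝ) :
    coeff n ((exp ℝ - 1) ^ m * rescale x (exp ℝ)) =
      m.factorial * stirling2W n m x / n.factorial := by
  have hterm : ∀ j, exp ℝ ^ j * (-1) ^ (m - j) * (m.choose j : ℝ⟦X⟧) * rescale x (exp ℝ) =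
      C ((-1 : ℝ) ^ (m - j) * m.choose j) * rescale (x + j) (exp ℝ) := fun j => by
    rw [exp_pow_eq_rescale_exp, ← exp_mul_exp_eq_exp_add]
    simp only [map_mul, map_pow, map_neg, map_one, map_natCast]
    ring
  rw [sub_eq_add_neg, add_pow, sum_mul, map_sum, stirling2W]
  simp only [hterm, coeff_C_mul, coeff_rescale_exp, mul_sum, sum_div]
  have : (m.factorial : ℝ) ≠ 0 := by positivity
  field_simp

theorem stirling2W_eq_zero_of_lt {n m : ℕ} (h : n < m) (x : ℝ) : stirling2W n m x = 0 := by
  have hcoeff := coeff_exp_sub_one_pow_mul_rescale_exp m n x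
  rw [coeff_pow_mul_eq_zero_of_lt (by simp) _ h] at hcoeff
  simpa [Nat.factorial_ne_zero] using hcoeff.symm

theorem stirling2W_zero_right (n : ℕ) (x : ℝ) : stirling2W n 0 x = x ^ n := by
  simp [stirling2W]

theorem stirling2W_zero_left (m : ℕ) (x : ℝ) : stirling2W 0 m x = if m = 0 then 1 else 0 := by
  rcases m with _ | m
  · simp [stirling2W]
  · simp [stirling2W_eq_zero_of_lt (Nat.succ_pos m)]

theorem derivative_exp_sub_one_pow_succ_mul_rescale_exp (m : ℕ) (x : ℝ) :
    derivative ℝ ((exp ℝ - 1) ^ (m + 1) * rescale x (exp ℝ)) =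
      C (x + (m + 1)) * ((exp ℝ - 1) ^ (m + 1) * rescale x (exp ℝ)) +
        C ((m : ℝ) + 1) * ((exp ℝ - 1) ^ m * rescale x (exp ℝ)) := by
  have hexp : derivative ℝ (exp ℝ) = exp ℝ := by
    simpa using derivative_rescale_exp (1 : ℝ)
  rw [Derivation.leibniz, Derivation.leibniz_pow, map_sub, hexp, Derivation.map_one_eq_zero,
    derivative_rescale_exp]
  simp only [smul_eq_mul, nsmul_eq_mul, map_add, map_natCast, map_one, Nat.add_sub_cancel]
  push_cast
  ring

theorem stirling2W_succ_succ (n m : ℕ) (x : ℝ) :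
    stirling2W (n + 1) (m + 1) x = stirling2W n m x + (x + (m + 1)) * stirling2W n (m + 1) x := by
  have h := congrArg (coeff n) (derivative_exp_sub_one_pow_succ_mul_rescale_exp m x)
  rw [coeff_derivative, map_add, coeff_C_mul, coeff_C_mul,
    coeff_exp_sub_one_pow_mul_rescale_exp, coeff_exp_sub_one_pow_mul_rescale_exp,
    coeff_exp_sub_one_pow_mul_rescale_exp, Nat.factorial_succ, Nat.factorial_succ] at h
  push_cast at h
  field_simp at h
  linear_combination h

theorem coeff_one_sub_exp_neg_pow_mul_rescale_exp (m n : ℕ) (x : ℝ) :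
    coeff n ((1 - rescale (-1) (exp ℝ)) ^ m * rescale (-x) (exp ℝ)) =
      (-1) ^ (n + m) * m.factorial * stirling2W n m x / n.factorial := by
  have hflip : (1 - rescale (-1) (exp ℝ)) ^ m * rescale (-x) (exp ℝ) =
      C ((-1) ^ m) * rescale (-1) ((exp ℝ - 1) ^ m * rescale x (exp ℝ)) := by
    rw [map_mul (rescale (-1)), map_pow (rescale (-1)), map_sub, map_one, rescale_rescale,
      mul_neg_one, ← mul_assoc, map_pow, ← mul_pow, map_neg, map_one, neg_one_mul, neg_sub]
  rw [hflip, coeff_C_mul, coeff_rescale, coeff_exp_sub_one_pow_mul_rescale_exp]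
  ring

theorem coeff_pqBernSeries_mul (p q : ℝ) (k : ℤ) (f : ℝ⟦X⟧) (n : ℕ) :
    coeff n (pqBernSeries p q k * f) = ∑ m ∈ range (n + 1),
      (pqInt p q (m + 1) ^ k)⁻¹ * coeff n ((1 - rescale (-1) (exp ℝ)) ^ m * f) := by
  have hu : constantCoeff (1 - rescale (-1 : ℝ) (exp ℝ)) = 0 := by
    rw [map_sub, map_one, ← coeff_zero_eq_constantCoeff_apply, coeff_rescale]
    simp [coeff_exp]
  have hcoeff : ∀ i ≤ n, coeff i (pqBernSeries p q k) = ∑ m ∈ range (n + 1),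
      (pqInt p q (m + 1) ^ k)⁻¹ * coeff i ((1 - rescale (-1) (exp ℝ)) ^ m) := by
    intro i hi
    rw [pqBernSeries, coeff_mk]
    refine sum_subset_zero_on_sdiff (range_subset_range.2 (by omega)) (fun m hm => ?_)
      (fun m _ => div_eq_inv_mul _ _)
    rw [mem_sdiff, mem_range, mem_range] at hm
    rw [← mul_one ((1 - rescale (-1) (exp ℝ)) ^ m),
      coeff_pow_mul_eq_zero_of_lt hu 1 (by omega), mul_zero]
  simp only [coeff_mul, mul_sum]
  rw [sum_comm]
  refine sum_congr rfl fun ij hij => ?_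
  rw [hcoeff ij.1 (HasAntidiagonal.antidiagonal.fst_le hij), sum_mul]
  simp only [mul_assoc]

theorem pqBernoulli_eq_sum_stirling2W {p q : ℝ} {k : ℤ} {x : ℝ} {b : ℕ → ℝ}
    (hb : pqBernSeries p q k * rescale (-x) (exp ℝ) = egf b) (n : ℕ) :
    b n = ∑ m ∈ range (n + 1),
      (-1) ^ (n + m) * m.factorial * stirling2W n m x * (pqInt p q (m + 1) ^ k)⁻¹ := by
  have h := congrArg (coeff n) hb
  simp only [coeff_pqBernSeries_mul, coeff_one_sub_exp_neg_pow_mul_rescale_exp, egf,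
    coeff_mk] at h
  rw [eq_div_iff (by positivity), sum_mul] at h
  rw [← h]
  refine sum_congr rfl fun m _ => ?_
  field_simp

end GeneratingFunctions

theorem sum_stirling2W_succ_mul (n : ℕ) (y : ℝ) (g : ℕ → ℝ) :
    ∑ l ∈ range (n + 2), stirling2W (n + 1) l y * g l =
      ∑ l ∈ range (n + 1), stirling2W n l y * (g (l + 1) + (y + l) * g l) := by
  calc ∑ l ∈ range (n + 2), stirling2W (n + 1) l y * g l
      = ∑ l ∈ range (n + 1), (stirling2W n l y * g (l + 1) +
            stirling2W n (l + 1) y * ((y + (l + 1 : ℕ)) * g (l + 1))) +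
          stirling2W n 0 y * ((y + (0 : ℕ)) * g 0) := by
        rw [sum_range_succ']
        congr 1
        · refine sum_congr rfl fun l _ => ?_
          rw [stirling2W_succ_succ]
          push_cast
          ring
        · rw [stirling2W_zero_right, stirling2W_zero_right, pow_succ]
          push_cast
          ring
    _ = ∑ l ∈ range (n + 1), stirling2W n l y * g (l + 1) +
          ∑ l ∈ range (n + 2), stirling2W n l y * ((y + l) * g l) := by
        rw [sum_add_distrib, add_assoc, sum_range_succ' _ (n + 1)]
    _ = ∑ l ∈ range (n + 1), stirling2W n l y * (g (l + 1) + (y + l) * g l) := by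
        rw [sum_range_succ _ (n + 1), stirling2W_eq_zero_of_lt (Nat.lt_succ_self n), zero_mul,
          add_zero, ← sum_add_distrib]
        simp only [mul_add]

theorem sum_stirling2W_mul_signedStirling1W (n j : ℕ) (y : ℝ) :
    ∑ l ∈ range (n + 1), stirling2W n l y * signedStirling1W l j y = if n = j then 1 else 0 := by
  induction n generalizing j with
  | zero => simp [stirling2W_zero_left, signedStirling1W_zero_left, eq_comm]
  | succ n ih =>
    rw [sum_stirling2W_succ_mul]
    rcases j with _ | j
    · rw [if_neg (Nat.succ_ne_zero n)]
      refine sum_eq_zero fun l _ => ?_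
      rw [signedStirling1W_succ_zero]
      ring
    · simp [signedStirling1W_succ_succ, ih]

theorem sum_stirling2W_mul_signedStirling1W_of_le {n N : ℕ} (h : n ≤ N) (j : ℕ) (y : ℝ) :
    ∑ l ∈ range (N + 1), stirling2W n l y * signedStirling1W l j y = if n = j then 1 else 0 := by
  rw [← sum_stirling2W_mul_signedStirling1W n j y]
  refine (sum_subset (range_subset_range.2 (by omega)) fun l _ hl => ?_).symm
  rw [stirling2W_eq_zero_of_lt (by rw [mem_range] at hl; omega), zero_mul]

theorem sum_range_mul_eq_ite_comm {R : Type*} [CommRing R] {f g : ℕ → ℕ → R} {N : ℕ}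
    (h : ∀ i ≤ N, ∀ j ≤ N, ∑ l ∈ range (N + 1), f i l * g l j = if i = j then 1 else 0)
    {i j : ℕ} (hi : i ≤ N) (hj : j ≤ N) :
    ∑ l ∈ range (N + 1), g i l * f l j = if i = j then 1 else 0 := by
  let F : Matrix (Fin (N + 1)) (Fin (N + 1)) R := Matrix.of fun a b => f a b
  let G : Matrix (Fin (N + 1)) (Fin (N + 1)) R := Matrix.of fun a b => g a b
  have hFG : F * G = 1 := by
    ext a b
    simp only [F, G, Matrix.mul_apply, Matrix.of_apply, Matrix.one_apply]
    rw [Fin.sum_univ_eq_sum_range (fun l => f a l * g l b),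
      h a (Nat.lt_succ_iff.1 a.2) b (Nat.lt_succ_iff.1 b.2)]
    simp [Fin.val_inj]
  have hGF : (G * F) ⟨i, Nat.lt_succ_of_le hi⟩ ⟨j, Nat.lt_succ_of_le hj⟩ =
      (1 : Matrix (Fin (N + 1)) (Fin (N + 1)) R) ⟨i, Nat.lt_succ_of_le hi⟩
        ⟨j, Nat.lt_succ_of_le hj⟩ := by
    rw [mul_eq_one_comm.1 hFG]
  simp only [F, G, Matrix.mul_apply, Matrix.of_apply, Matrix.one_apply, Fin.mk.injEq] at hGF
  rwa [Fin.sum_univ_eq_sum_range (fun l => g i l * f l j)] at hGF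

theorem sum_signedStirling1W_mul_stirling2W {N m r : ℕ} (hm : m ≤ N) (hr : r ≤ N) (y : ℝ) :
    ∑ l ∈ range (N + 1), signedStirling1W m l y * stirling2W l r y = if m = r then 1 else 0 :=
  sum_range_mul_eq_ite_comm (fun _ hi j _ => sum_stirling2W_mul_signedStirling1W_of_le hi j y)
    hm hr

theorem sum_mul_sum_eq_of_orthogonal {R : Type*} [CommSemiring R] {f g : ℕ → ℕ → R} {N m : ℕ}
    (hm : m ≤ N) (hg : ∀ l r, l < r → g l r = 0)
    (horth : ∀ r ≤ N, ∑ l ∈ range (N + 1), f m l * g l r = if m = r then 1 else 0)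
    (c : ℕ → R) :
    ∑ l ∈ range (N + 1), f m l * ∑ r ∈ range (l + 1), g l r * c r = c m := by
  have hext : ∀ l ∈ range (N + 1),
      ∑ r ∈ range (l + 1), g l r * c r = ∑ r ∈ range (N + 1), g l r * c r := fun l hl =>
    sum_subset (range_subset_range.2 (mem_range.1 hl)) fun r _ hr => by
      rw [hg l r (by rw [mem_range] at hr; omega), zero_mul]
  calc ∑ l ∈ range (N + 1), f m l * ∑ r ∈ range (l + 1), g l r * c r
      = ∑ r ∈ range (N + 1), (∑ l ∈ range (N + 1), f m l * g l r) * c r := by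
        rw [sum_congr rfl fun l hl => by rw [hext l hl]]
        simp only [mul_sum, sum_mul, mul_assoc]
        exact sum_comm
    _ = ∑ r ∈ range (N + 1), (if m = r then 1 else 0) * c r :=
        sum_congr rfl fun r hr => by rw [horth r (mem_range_succ_iff.1 hr)]
    _ = c m := by simp [Nat.lt_succ_of_le hm]

theorem sum_sum_pow_choose_mul {R : Type*} [CommSemiring R] (w c : ℕ → R) (z : R) (n : ℕ) :
    ∑ m ∈ range (n + 1), (∑ j ∈ range (n + 1), w j * (z ^ (j - m) * j.choose m)) * c m =
      ∑ j ∈ range (n + 1), w j * ∑ l ∈ range (j + 1), j.choose l * z ^ l * c (j - l) := by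
  simp only [sum_mul]
  rw [sum_comm]
  refine sum_congr rfl fun j hj => ?_
  rw [← sum_subset (range_subset_range.2 (mem_range.1 hj)) fun m _ hm => by
    rw [Nat.choose_eq_zero_of_lt (by rw [mem_range] at hm; omega)]; simp, ← sum_range_reflect,
    mul_sum]
  refine sum_congr rfl fun l hl => ?_
  have hlj : l ≤ j := mem_range_succ_iff.1 hl
  rw [Nat.succ_sub_one, Nat.sub_sub_self hlj, Nat.choose_symm hlj]
  ring

theorem signedStirling1W_eq_sum_choose (n m : ℕ) (x : ℝ) :
    signedStirling1W n m x = ∑ j ∈ range (n + 1),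
      (-1) ^ (n - j) * (stirling1 n j : ℝ) * ((-x) ^ (j - m) * j.choose m) := by
  rw [signedStirling1W, stirling1W_eq_sum_choose, mul_sum]
  refine sum_congr rfl fun j hj => ?_
  rcases le_or_gt m j with hmj | hjm
  · rw [neg_pow x, neg_one_pow_sub_of_le (mem_range_succ_iff.1 hj), neg_one_pow_sub_of_le hmj]
    linear_combination (-(-1) ^ (n + m) * (stirling1 n j : ℝ) * x ^ (j - m) * j.choose m) *
      neg_one_pow_mul_self (R := ℝ) j
  · simp [Nat.choose_eq_zero_of_lt hjm]

theorem pqCauchy1_eq_sum_signedStirling1W (p q : ℝ) (k : ℤ) (x : ℝ) (n : ℕ) :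
    pqCauchy1 p q k x n =
      ∑ m ∈ range (n + 1), signedStirling1W n m x * (pqInt p q (m + 1) ^ k)⁻¹ := by
  simp only [signedStirling1W_eq_sum_choose, sum_sum_pow_choose_mul, pqCauchy1, div_eq_mul_inv]

theorem pqCauchy2_eq_sum_stirling1W (p q : ℝ) (k : ℤ) (x : ℝ) (n : ℕ) :
    pqCauchy2 p q k x n =
      ∑ m ∈ range (n + 1), (-1) ^ n * stirling1W n m (-x) * (pqInt p q (m + 1) ^ k)⁻¹ := by
  simp only [mul_assoc, ← mul_sum, stirling1W_eq_sum_choose, sum_sum_pow_choose_mul, pqCauchy2,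
    div_eq_mul_inv]

theorem sum_stirling2W_mul_pqCauchy1 (p q : ℝ) (k : ℤ) {m N : ℕ} (hm : m ≤ N) (y : ℝ) :
    ∑ l ∈ range (N + 1), stirling2W m l y * pqCauchy1 p q k y l = (pqInt p q (m + 1) ^ k)⁻¹ := by
  simp only [pqCauchy1_eq_sum_signedStirling1W]
  exact sum_mul_sum_eq_of_orthogonal (f := fun a l => stirling2W a l y) hm
    (fun l r h => signedStirling1W_eq_zero_of_lt h y)
    (fun r _ => sum_stirling2W_mul_signedStirling1W_of_le hm r y) _

theorem sum_stirling2W_neg_mul_pqCauchy2 (p q : ℝ) (k : ℤ) {m N : ℕ} (hm : m ≤ N) (y : ℝ) :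
    ∑ l ∈ range (N + 1), stirling2W m l (-y) * pqCauchy2 p q k y l =
      (-1) ^ m * (pqInt p q (m + 1) ^ k)⁻¹ := by
  have hC : ∀ l, pqCauchy2 p q k y l = ∑ r ∈ range (l + 1),
      signedStirling1W l r (-y) * ((-1) ^ r * (pqInt p q (r + 1) ^ k)⁻¹) := fun l => by
    rw [pqCauchy2_eq_sum_stirling1W]
    refine sum_congr rfl fun r _ => ?_
    rw [signedStirling1W, pow_add]
    linear_combination (-(-1) ^ l * stirling1W l r (-y) * (pqInt p q (r + 1) ^ k)⁻¹) *
      neg_one_pow_mul_self (R := ℝ) r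
  simp only [hC]
  exact sum_mul_sum_eq_of_orthogonal (f := fun a l => stirling2W a l (-y)) hm
    (fun l r h => signedStirling1W_eq_zero_of_lt h (-y))
    (fun r _ => sum_stirling2W_mul_signedStirling1W_of_le hm r (-y)) _

theorem sum_stirling1W_mul_pqBernoulli {p q : ℝ} {k : ℤ} {y : ℝ} {b : ℕ → ℝ}
    (hb : pqBernSeries p q k * PowerSeries.rescale (-y) (PowerSeries.exp ℝ) = egf b)
    {m N : ℕ} (hm : m ≤ N) :
    ∑ l ∈ range (N + 1), stirling1W m l y * b l = m.factorial * (pqInt p q (m + 1) ^ k)⁻¹ := by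
  have hterm : ∀ l, stirling1W m l y * b l = (-1) ^ m * (signedStirling1W m l y *
      ∑ r ∈ range (l + 1), stirling2W l r y *
        ((-1) ^ r * r.factorial * (pqInt p q (r + 1) ^ k)⁻¹)) := fun l => by
    rw [pqBernoulli_eq_sum_stirling2W hb, signedStirling1W, mul_sum, mul_sum, mul_sum]
    refine sum_congr rfl fun r _ => ?_
    rw [pow_add, pow_add]
    linear_combination (-stirling1W m l y * (-1) ^ l * (-1) ^ r * r.factorial * stirling2W l r y *
      (pqInt p q (r + 1) ^ k)⁻¹) * neg_one_pow_mul_self (R := ℝ) m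
  rw [sum_congr rfl fun l _ => hterm l, ← mul_sum,
    sum_mul_sum_eq_of_orthogonal (f := fun a l => signedStirling1W a l y)
      (g := fun l r => stirling2W l r y) hm (fun l r h => stirling2W_eq_zero_of_lt h y)
      (fun r hr => sum_signedStirling1W_mul_stirling2W hm hr y)]
  linear_combination (m.factorial * (pqInt p q (m + 1) ^ k)⁻¹ : ℝ) * neg_one_pow_mul_self (R := ℝ) m

theorem pqPolyBernoulli_pqPolyCauchy_relations_general
    (p q : ℝ) (k : ℤ)
    (B : ℝ → ℕ → ℝ)
    (hB : ∀ x : ℝ,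
      pqBernSeries p q k * PowerSeries.rescale (-x) (PowerSeries.exp ℝ) = egf (B x)) :
    ∀ (n : ℕ) (x y : ℝ),
      (B x n =
        ∑ l ∈ Finset.range (n + 1), ∑ m ∈ Finset.range (n + 1),
          (-1 : ℝ) ^ (n - m) * (m.factorial : ℝ) * stirling2W n m x * stirling2W m l y *
            pqCauchy1 p q k y l) ∧
      (B x n =
        ∑ l ∈ Finset.range (n + 1), ∑ m ∈ Finset.range (n + 1),
          (-1 : ℝ) ^ n * (m.factorial : ℝ) * stirling2W n m x * stirling2W m l (-y) *
            pqCauchy2 p q k y l) ∧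
      (pqCauchy1 p q k x n =
        ∑ l ∈ Finset.range (n + 1), ∑ m ∈ Finset.range (n + 1),
          ((-1 : ℝ) ^ (n - m) / (m.factorial : ℝ)) * stirling1W n m x * stirling1W m l y *
            B y l) ∧
      (pqCauchy2 p q k x n =
        ∑ l ∈ Finset.range (n + 1), ∑ m ∈ Finset.range (n + 1),
          ((-1 : ℝ) ^ n / (m.factorial : ℝ)) * stirling1W n m (-x) * stirling1W m l y *
            B y l) := by
  intro n x y
  refine ⟨?_, ?_, ?_, ?_⟩
  · rw [pqBernoulli_eq_sum_stirling2W (hB x), sum_comm]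
    refine sum_congr rfl fun m hm => ?_
    simp only [mul_assoc, ← mul_sum]
    rw [sum_stirling2W_mul_pqCauchy1 p q k (mem_range_succ_iff.1 hm),
      neg_one_pow_sub_of_le (mem_range_succ_iff.1 hm)]
  · rw [pqBernoulli_eq_sum_stirling2W (hB x), sum_comm]
    refine sum_congr rfl fun m hm => ?_
    simp only [mul_assoc, ← mul_sum]
    rw [sum_stirling2W_neg_mul_pqCauchy2 p q k (mem_range_succ_iff.1 hm), pow_add]
    ring
  · rw [pqCauchy1_eq_sum_signedStirling1W, sum_comm]
    refine sum_congr rfl fun m hm => ?_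
    simp only [mul_assoc, ← mul_sum]
    rw [sum_stirling1W_mul_pqBernoulli (hB y) (mem_range_succ_iff.1 hm), signedStirling1W,
      neg_one_pow_sub_of_le (mem_range_succ_iff.1 hm)]
    field_simp
  · rw [pqCauchy2_eq_sum_stirling1W, sum_comm]
    refine sum_congr rfl fun m hm => ?_
    simp only [mul_assoc, ← mul_sum]
    rw [sum_stirling1W_mul_pqBernoulli (hB y) (mem_range_succ_iff.1 hm)]
    field_simp

theorem pqPolyBernoulli_pqPolyCauchy_relations
    (p q : ℝ) (hq : 0 < q) (hqp : q < p) (hp : p ≤ 1) (k : ℤ)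
    (B : ℝ → ℕ → ℝ)
    (hB : ∀ x : ℝ,
      pqBernSeries p q k * PowerSeries.rescale (-x) (PowerSeries.exp ℝ) = egf (B x)) :
    ∀ (n : ℕ) (x y : ℝ),
      (B x n =
        ∑ l ∈ Finset.range (n + 1), ∑ m ∈ Finset.range (n + 1),
          (-1 : ℝ) ^ (n - m) * (m.factorial : ℝ) * stirling2W n m x * stirling2W m l y *
            pqCauchy1 p q k y l) ∧
      (B x n =
        ∑ l ∈ Finset.range (n + 1), ∑ m ∈ Finset.range (n + 1),
          (-1 : ℝ) ^ n * (m.factorial : ℝ) * stirling2W n m x * stirling2W m l (-y) *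
            pqCauchy2 p q k y l) ∧
      (pqCauchy1 p q k x n =
        ∑ l ∈ Finset.range (n + 1), ∑ m ∈ Finset.range (n + 1),
          ((-1 : ℝ) ^ (n - m) / (m.factorial : ℝ)) * stirling1W n m x * stirling1W m l y *
            B y l) ∧
      (pqCauchy2 p q k x n =
        ∑ l ∈ Finset.range (n + 1), ∑ m ∈ Finset.range (n + 1),
          ((-1 : ℝ) ^ n / (m.factorial : ℝ)) * stirling1W n m (-x) * stirling1W m l y *
            B y l) :=
  pqPolyBernoulli_pqPolyCauchy_relations_general p q k B hB
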